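/- arXiv:1411.2289 — 6 statements merged into one kernel-verified Lean document; each statement's English description precedes it below -/
import Mathlib

section
/- Let X be a Z^d shift space over a finite alphabet A and g a natural number such that for every pair of sites p, q in Z^d with dist(p,q) ≥ g, every finite set S ⊆ Z^d, and all configurations u ∈ A^{p}, v ∈ A^{q}, s ∈ A^S with [us]_X ≠ ∅ and [sv]_X ≠ ∅, one has [usv]_X ≠ ∅. Then X satisfies topological strong spatial mixing (TSSM) with gap g, i.e., the same conclusion holds for arbitrary finite sets U, V in place of the singletons {p}, {q}. -/
abbrev Site (d : ℕ) := Fin d → ℤ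

def dist1 {d : ℕ} (p q : Site d) : ℕ := ∑ i, (p i - q i).natAbs

def IsShiftSpace {d : ℕ} {A : Type*} [TopologicalSpace A] (X : Set (Site d → A)) : Prop :=
  IsClosed X ∧ ∀ t : Site d, (fun (x : Site d → A) (q : Site d) => x (q + t)) '' X = X

/-- Topological strong spatial mixing with gap `g`. -/
def TSSM {d : ℕ} {A : Type*} (X : Set (Site d → A)) (g : ℕ) : Prop :=
  ∀ U S V : Set (Site d), U.Finite → S.Finite → V.Finite →
    Disjoint U S → Disjoint S V → Disjoint U V →
    (∀ p ∈ U, ∀ q ∈ V, g ≤ dist1 p q) →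
    ∀ u s v : Site d → A,
      (∃ x ∈ X, (∀ p ∈ U, x p = u p) ∧ (∀ p ∈ S, x p = s p)) →
      (∃ x ∈ X, (∀ p ∈ S, x p = s p) ∧ (∀ p ∈ V, x p = v p)) →
      ∃ x ∈ X, (∀ p ∈ U, x p = u p) ∧ (∀ p ∈ S, x p = s p) ∧ ∀ p ∈ V, x p = v p

/-!
Add the sites of `V` one at a time: the value of `v` at a new site `a` is first glued onto `u`
using the pair `(U, {a})`; then `a` joins the separating set and the rest of `V` is glued by
induction. This reduces a pair `(U, V)` to the pairs `(U, {q})`, and since gluing is symmetric in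
`U` and `V`, the same induction on `U` reduces these to pairs of singletons.
-/

open Set Function

section Gluing

variable {ι A : Type*}

def Glues (X : Set (ι → A)) (U V : Set ι) : Prop :=
  ∀ S : Set ι, S.Finite → Disjoint U S → Disjoint S V → ∀ u s v : ι → A,
    (∃ x ∈ X, EqOn x u U ∧ EqOn x s S) → (∃ x ∈ X, EqOn x s S ∧ EqOn x v V) →
    ∃ x ∈ X, EqOn x u U ∧ EqOn x s S ∧ EqOn x v V

variable {X : Set (ι → A)} {U V : Set ι}

theorem Glues.symm (h : Glues X U V) : Glues X V U := by
  intro S hS hVS hSU v s u ⟨x, hx, hxv, hxs⟩ ⟨y, hy, hys, hyu⟩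
  obtain ⟨z, hz, hzu, hzs, hzv⟩ := h S hS hSU.symm hVS.symm u s v ⟨y, hy, hyu, hys⟩ ⟨x, hx, hxs, hxv⟩
  exact ⟨z, hz, hzv, hzs, hzu⟩

theorem glues_empty_right : Glues X U ∅ := by
  rintro S - - - u s v ⟨x, hx, hxu, hxs⟩ -
  exact ⟨x, hx, hxu, hxs, eqOn_empty _ _⟩

theorem eqOn_update_insert_iff [DecidableEq ι] {S : Set ι} {a : ι} (ha : a ∉ S)
    (x s : ι → A) (w : A) : EqOn x (update s a w) (insert a S) ↔ x a = w ∧ EqOn x s S := by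
  refine forall_mem_insert.trans (and_congr (by rw [update_self]) (forall₂_congr fun r hr => ?_))
  rw [update_of_ne (ne_of_mem_of_not_mem hr ha)]

theorem Glues.insert_right {a : ι} (haU : a ∉ U) (haV : a ∉ V)
    (ha : Glues X U {a}) (hV : Glues X U V) : Glues X U (insert a V) := by
  classical
  intro S hS hUS hSaV u s v hus ⟨z, hz, hzs, hzv⟩
  rw [disjoint_insert_right] at hSaV
  obtain ⟨haS, hSV⟩ := hSaV
  obtain ⟨y, hy, hyu, hys, hya⟩ := ha S hS hUS (disjoint_singleton_right.2 haS) u s v hus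
    ⟨z, hz, hzs, hzv.mono (singleton_subset_iff.2 (mem_insert a V))⟩
  have hUaS : Disjoint U (insert a S) := disjoint_insert_right.2 ⟨haU, hUS⟩
  have haSV : Disjoint (insert a S) V := disjoint_insert_left.2 ⟨haV, hSV⟩
  obtain ⟨x, hx, hxu, hxs', hxv⟩ := hV (insert a S) (hS.insert a) hUaS haSV u (update s a (v a)) v
    ⟨y, hy, hyu, (eqOn_update_insert_iff haS y s _).2 ⟨eqOn_singleton.1 hya, hys⟩⟩
    ⟨z, hz, (eqOn_update_insert_iff haS z s _).2 ⟨hzv (mem_insert a V), hzs⟩,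
      hzv.mono (subset_insert a V)⟩
  obtain ⟨hxa, hxs⟩ := (eqOn_update_insert_iff haS x s _).1 hxs'
  exact ⟨x, hx, hxu, hxs, forall_mem_insert.2 ⟨hxa, hxv⟩⟩

theorem glues_of_forall_singleton_right (hV : V.Finite) (hUV : Disjoint U V)
    (h : ∀ a ∈ V, Glues X U {a}) : Glues X U V := by
  induction V, hV using Set.Finite.induction_on with
  | empty => exact glues_empty_right
  | @insert a V haV _ ih =>
    rw [disjoint_insert_right] at hUV
    exact (h a (mem_insert a V)).insert_right hUV.1 haV <| ih hUV.2 fun b hb =>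
      h b (mem_insert_of_mem a hb)

theorem glues_of_forall_singleton (hU : U.Finite) (hV : V.Finite) (hUV : Disjoint U V)
    (h : ∀ p ∈ U, ∀ q ∈ V, Glues X {p} {q}) : Glues X U V :=
  glues_of_forall_singleton_right hV hUV fun q hq =>
    (glues_of_forall_singleton_right hU (hUV.symm.mono_left (singleton_subset_iff.2 hq))
      fun p hp => (h p hp q hq).symm).symm

end Gluing

theorem tssm_of_singletons_general {d : ℕ} {A : Type*}
    (X : Set (Site d → A)) (g : ℕ)
    (h : ∀ p q : Site d, g ≤ dist1 p q →
      ∀ S : Set (Site d), S.Finite → p ∉ S → q ∉ S → p ≠ q →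
      ∀ (u v : A) (s : Site d → A),
        (∃ x ∈ X, x p = u ∧ ∀ r ∈ S, x r = s r) →
        (∃ x ∈ X, (∀ r ∈ S, x r = s r) ∧ x q = v) →
        ∃ x ∈ X, x p = u ∧ (∀ r ∈ S, x r = s r) ∧ x q = v) :
    TSSM X g := by
  intro U S V hU hS hV hUS hSV hUV hgap
  have hsingle : ∀ p ∈ U, ∀ q ∈ V, Glues X {p} {q} := by
    intro p hp q hq S hS hpS hSq u s v ⟨x, hx, hxu, hxs⟩ ⟨y, hy, hys, hyv⟩
    obtain ⟨z, hz, hzu, hzs, hzv⟩ := h p q (hgap p hp q hq) S hS (disjoint_singleton_left.1 hpS)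
      (disjoint_singleton_right.1 hSq) (hUV.ne_of_mem hp hq) (u p) (v q) s
      ⟨x, hx, eqOn_singleton.1 hxu, hxs⟩ ⟨y, hy, hys, eqOn_singleton.1 hyv⟩
    exact ⟨z, hz, eqOn_singleton.2 hzu, hzs, eqOn_singleton.2 hzv⟩
  exact glues_of_forall_singleton hU hV hUV hsingle S hS hUS hSV

theorem tssm_of_singletons {d : ℕ} {A : Type*} [Fintype A]
    [TopologicalSpace A] [DiscreteTopology A]
    (X : Set (Site d → A)) (hX : IsShiftSpace X) (g : ℕ)
    (h : ∀ p q : Site d, g ≤ dist1 p q →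
      ∀ S : Set (Site d), S.Finite → p ∉ S → q ∉ S → p ≠ q →
      ∀ (u v : A) (s : Site d → A),
        (∃ x ∈ X, x p = u ∧ ∀ r ∈ S, x r = s r) →
        (∃ x ∈ X, (∀ r ∈ S, x r = s r) ∧ x q = v) →
        ∃ x ∈ X, x p = u ∧ (∀ r ∈ S, x r = s r) ∧ x q = v) :
    TSSM X g :=
  tssm_of_singletons_general X g h
end

section
/- A Z^d shift space X satisfies topological strong spatial mixing (with some gap g) if and only if its set of first offenders O(X) is finite. -/
def globallyAdm {d : ℕ} {A : Type*} (X : Set (Site d → A)) (S : Set (Site d))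
    (u : Site d → A) : Prop := ∃ x ∈ X, ∀ p ∈ S, x p = u p

/-- The set of first offenders of `X` whose (finite) shape contains the origin.
A first offender is a configuration which is not globally admissible but whose
restriction to every proper subset of its shape is globally admissible.
(Configurations are normalized to take the value `default` outside their shape.) -/
def firstOffenders {d : ℕ} {A : Type*} [Inhabited A] (X : Set (Site d → A)) :
    Set (Finset (Site d) × (Site d → A)) :=
  {P | (0 : Site d) ∈ P.1 ∧ ¬ globallyAdm X ↑P.1 P.2 ∧
       (∀ S : Finset (Site d), S ⊂ P.1 → globallyAdm X ↑S P.2) ∧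
       ∀ p, p ∉ P.1 → P.2 p = default}

/-- `dist1` is translation invariant. -/
lemma dist1_sub_right {d : ℕ} (p q t : Site d) : dist1 (p - t) (q - t) = dist1 p q := by
  unfold dist1
  apply Finset.sum_congr rfl
  intro i _
  congr 1
  simp only [Pi.sub_apply]
  ring

/-- Every non-globally-admissible configuration on a finite shape contains a minimal
non-globally-admissible subconfiguration. -/
lemma exists_minimal_bad {d : ℕ} {A : Type*} (X : Set (Site d → A)) :
    ∀ (W : Finset (Site d)) (w : Site d → A), ¬ globallyAdm X ↑W w →
      ∃ W', W' ⊆ W ∧ ¬ globallyAdm X ↑W' w ∧ ∀ S : Finset (Site d), S ⊂ W' →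
        globallyAdm X ↑S w := by
  intro W
  induction W using Finset.strongInduction with
  | _ W ih =>
    intro w h
    by_cases hall : ∀ S : Finset (Site d), S ⊂ W → globallyAdm X ↑S w
    · exact ⟨W, Finset.Subset.refl W, h, hall⟩
    · push_neg at hall
      obtain ⟨S, hSW, hSbad⟩ := hall
      obtain ⟨W', hW'S, h1, h2⟩ := ih S hSW w hSbad
      exact ⟨W', hW'S.trans hSW.subset, h1, h2⟩

theorem tssm_iff_finitely_many_first_offenders {d : ℕ} {A : Type*} [Fintype A] [Inhabited A]
    [TopologicalSpace A] [DiscreteTopology A]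
    (X : Set (Site d → A)) (hX : IsShiftSpace X) :
    (∃ g : ℕ, TSSM X g) ↔ (firstOffenders X).Finite := by
  classical
  have hshift : ∀ (t : Site d) (x : Site d → A), x ∈ X → (fun q => x (q + t)) ∈ X := by
    intro t x hx
    have := hX.2 t
    rw [← this]
    exact ⟨x, hx, rfl⟩
  constructor
  · -- TSSM ⇒ finitely many first offenders
    rintro ⟨g, hg⟩
    -- any two distinct points in the shape of a first offender are at distance < g
    have key : ∀ P ∈ firstOffenders X, ∀ a ∈ P.1, ∀ b ∈ P.1, a ≠ b → dist1 a b < g := by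
      rintro ⟨W, w⟩ ⟨h0, hbad, hmin, _⟩ a ha b hb hab
      by_contra hge
      push_neg at hge
      apply hbad
      have := hg {a} ((↑W : Set (Site d)) \ {a, b}) {b} (Set.finite_singleton a)
        ((W.finite_toSet).subset Set.diff_subset) (Set.finite_singleton b)
        (by
          rw [Set.disjoint_left]
          rintro p rfl hp
          exact hp.2 (Or.inl rfl))
        (by
          rw [Set.disjoint_right]
          rintro p rfl hp
          exact hp.2 (Or.inr rfl))
        (by simpa [Set.disjoint_singleton_left] using hab)
        (by
          rintro p rfl q rfl
          exact hge)
        w w w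
        (by
          obtain ⟨x, hx, hxm⟩ := hmin (W.erase b) (Finset.erase_ssubset hb)
          refine ⟨x, hx, ?_, ?_⟩
          · intro p hp
            rw [Set.mem_singleton_iff] at hp
            subst hp
            exact hxm p (by simp [Finset.mem_erase, hab, ha])
          · rintro p ⟨hpW, hp2⟩
            exact hxm p (by
              simp only [Finset.coe_erase, Set.mem_diff, Set.mem_singleton_iff]
              exact ⟨hpW, fun h => hp2 (Or.inr h)⟩))
        (by
          obtain ⟨x, hx, hxm⟩ := hmin (W.erase a) (Finset.erase_ssubset ha)
          refine ⟨x, hx, ?_, ?_⟩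
          · rintro p ⟨hpW, hp2⟩
            exact hxm p (by
              simp only [Finset.coe_erase, Set.mem_diff, Set.mem_singleton_iff]
              exact ⟨hpW, fun h => hp2 (Or.inl h)⟩)
          · intro p hp
            rw [Set.mem_singleton_iff] at hp
            subst hp
            exact hxm p (by simp [Finset.mem_erase, Ne.symm hab, hb]))
      obtain ⟨x, hx, hxa, hxS, hxb⟩ := this
      refine ⟨x, hx, ?_⟩
      intro p hp
      by_cases hpa : p = a
      · exact hpa ▸ hxa a rfl
      by_cases hpb : p = b
      · exact hpb ▸ hxb b rfl
      · exact hxS p ⟨hp, by simp [hpa, hpb]⟩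
    -- hence every first offender lives in a fixed ball
    set B : Finset (Site d) := Finset.Icc (fun _ => -(g : ℤ)) (fun _ => (g : ℤ)) with hB
    have hball : ∀ P ∈ firstOffenders X, P.1 ⊆ B := by
      intro P hP q hq
      have h0 := hP.1
      have hd : dist1 0 q ≤ g := by
        by_cases hq0 : q = 0
        · subst hq0
          simp [dist1]
        · exact le_of_lt (key P hP 0 h0 q hq (fun h => hq0 h.symm))
      rw [hB, Finset.mem_Icc]
      have hbound : ∀ i, (q i).natAbs ≤ g := by
        intro i
        have hle : ((0 : Site d) i - q i).natAbs ≤ dist1 0 q :=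
          Finset.single_le_sum (f := fun i => ((0 : Site d) i - q i).natAbs)
            (fun _ _ => Nat.zero_le _) (Finset.mem_univ i)
        have h0i : (0 : Site d) i = 0 := rfl
        rw [h0i, zero_sub, Int.natAbs_neg] at hle
        exact hle.trans hd
      constructor
      · intro i
        have := hbound i
        show -(g : ℤ) ≤ q i
        omega
      · intro i
        have := hbound i
        show q i ≤ (g : ℤ)
        omega
    -- finiteness via an injection into a finite type
    have hsub : firstOffenders X ⊆
        {P : Finset (Site d) × (Site d → A) | P.1 ⊆ B ∧ ∀ p, p ∉ P.1 → P.2 p = default} := by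
      intro P hP
      exact ⟨hball P hP, hP.2.2.2⟩
    apply Set.Finite.subset _ hsub
    apply Set.Finite.of_finite_image (f := fun P => (P.1, fun b : B => P.2 b))
    · apply Set.Finite.subset (Set.Finite.prod (B.powerset).finite_toSet
        (Set.finite_univ (α := B → A)))
      rintro _ ⟨P, hP, rfl⟩
      exact ⟨by simpa [Finset.mem_powerset] using hP.1, Set.mem_univ _⟩
    · rintro P hP Q hQ hPQ
      replace hPQ : (P.1, fun b : B => P.2 ↑b) = (Q.1, fun b : B => Q.2 ↑b) := hPQ
      have h1 : P.1 = Q.1 := (Prod.ext_iff.mp hPQ).1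
      have h2 : ∀ b : B, P.2 b = Q.2 b := fun b => congrFun (Prod.ext_iff.mp hPQ).2 b
      refine Prod.ext h1 (funext fun p => ?_)
      by_cases hp : p ∈ P.1
      · exact h2 ⟨p, hP.1 hp⟩
      · rw [hP.2 p hp, hQ.2 p (h1 ▸ hp)]
  · -- finitely many first offenders ⇒ TSSM
    intro hfin
    set F := hfin.toFinset with hF
    set g : ℕ := 1 + F.sup (fun P => P.1.sup fun a => P.1.sup fun b => dist1 a b) with hgdef
    have key : ∀ P ∈ firstOffenders X, ∀ a ∈ P.1, ∀ b ∈ P.1, dist1 a b < g := by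
      intro P hP a ha b hb
      have h1 : dist1 a b ≤ P.1.sup fun b => dist1 a b := Finset.le_sup hb
      have h2 : (P.1.sup fun b => dist1 a b) ≤ P.1.sup fun a => P.1.sup fun b => dist1 a b :=
        Finset.le_sup (f := fun a => P.1.sup fun b => dist1 a b) ha
      have h3 : (P.1.sup fun a => P.1.sup fun b => dist1 a b) ≤
          F.sup (fun P => P.1.sup fun a => P.1.sup fun b => dist1 a b) :=
        Finset.le_sup (f := fun P : Finset (Site d) × (Site d → A) =>
          P.1.sup fun a => P.1.sup fun b => dist1 a b) (hfin.mem_toFinset.mpr hP)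
      omega
    refine ⟨g, ?_⟩
    intro U S V hU hS hV dUS dSV dUV hdist u s v h1 h2
    obtain ⟨x1, hx1X, hx1U, hx1S⟩ := h1
    obtain ⟨x2, hx2X, hx2S, hx2V⟩ := h2
    by_contra hno
    set w : Site d → A := fun p => if p ∈ U then u p else if p ∈ S then s p else v p with hw
    set W0 : Finset (Site d) := hU.toFinset ∪ hS.toFinset ∪ hV.toFinset with hW0
    have hmemW0 : ∀ p, p ∈ W0 → p ∈ U ∨ p ∈ S ∨ p ∈ V := by
      intro p hp
      rw [hW0] at hp
      simp only [Finset.mem_union, Set.Finite.mem_toFinset] at hp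
      tauto
    have hwU : ∀ p ∈ U, w p = u p := fun p hp => by rw [hw]; simp [hp]
    have hwS : ∀ p ∈ S, w p = s p := fun p hp => by
      have : p ∉ U := Set.disjoint_right.mp dUS hp
      rw [hw]; simp [hp, this]
    have hwV : ∀ p ∈ V, w p = v p := fun p hp => by
      have h1 : p ∉ U := Set.disjoint_right.mp dUV hp
      have h2 : p ∉ S := Set.disjoint_right.mp dSV hp
      rw [hw]; simp [h1, h2]
    have hnadm : ¬ globallyAdm X ↑W0 w := by
      rintro ⟨x, hx, hxm⟩
      apply hno
      have hmem : ∀ p, p ∈ U ∨ p ∈ S ∨ p ∈ V → p ∈ W0 := by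
        intro p hp
        rw [hW0]
        simp only [Finset.mem_union, Set.Finite.mem_toFinset]
        tauto
      refine ⟨x, hx, fun p hp => ?_, fun p hp => ?_, fun p hp => ?_⟩
      · rw [hxm p (hmem p (Or.inl hp)), hwU p hp]
      · rw [hxm p (hmem p (Or.inr (Or.inl hp))), hwS p hp]
      · rw [hxm p (hmem p (Or.inr (Or.inr hp))), hwV p hp]
    obtain ⟨W', hW'sub, hW'bad, hW'min⟩ := exists_minimal_bad X W0 w hnadm
    -- W' must meet U
    have hWU : ∃ p ∈ W', p ∈ U := by
      by_contra hc
      push_neg at hc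
      apply hW'bad
      refine ⟨x2, hx2X, fun p hp => ?_⟩
      rcases hmemW0 p (hW'sub hp) with h | h | h
      · exact absurd h (hc p hp)
      · rw [hx2S p h, hwS p h]
      · rw [hx2V p h, hwV p h]
    have hWV : ∃ q ∈ W', q ∈ V := by
      by_contra hc
      push_neg at hc
      apply hW'bad
      refine ⟨x1, hx1X, fun p hp => ?_⟩
      rcases hmemW0 p (hW'sub hp) with h | h | h
      · rw [hx1U p h, hwU p h]
      · rw [hx1S p h, hwS p h]
      · exact absurd h (hc p hp)
    obtain ⟨p, hpW', hpU⟩ := hWU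
    obtain ⟨q, hqW', hqV⟩ := hWV
    -- translate W' so that p sits at the origin; this yields a first offender
    set W'' : Finset (Site d) := W'.image (fun r => r - p) with hW''
    have hmemW'' : ∀ r, r ∈ W'' ↔ r + p ∈ W' := by
      intro r
      rw [hW'']
      simp only [Finset.mem_image]
      constructor
      · rintro ⟨a, ha, rfl⟩
        rwa [sub_add_cancel]
      · intro h
        exact ⟨r + p, h, by rw [add_sub_cancel_right]⟩
    set w0 : Site d → A := fun r => if r ∈ W'' then w (r + p) else default with hw0
    have hoff : (W'', w0) ∈ firstOffenders X := by
      refine ⟨?_, ?_, ?_, ?_⟩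
      · rw [hmemW'']
        simpa using hpW'
      · rintro ⟨x, hx, hxm⟩
        apply hW'bad
        refine ⟨fun r => x (r - p), ?_, ?_⟩
        · have hmem := hshift (-p) x hx
          have : (fun q => x (q + -p)) = fun r => x (r - p) := by
            funext r
            rw [sub_eq_add_neg]
          rwa [this] at hmem
        · intro r hr
          have hrW'' : r - p ∈ W'' := by
            rw [hmemW'', sub_add_cancel]
            exact hr
          show x (r - p) = w r
          rw [hxm (r - p) (Finset.mem_coe.mpr hrW''), hw0]
          simp only [hrW'', if_true, sub_add_cancel]
      · intro T hT
        have hTsub : T.image (fun r => r + p) ⊆ W' := by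
          intro a ha
          simp only [Finset.mem_image] at ha
          obtain ⟨r, hr, rfl⟩ := ha
          rw [← hmemW'']
          exact hT.subset hr
        have hcard : (T.image (fun r => r + p)).card < W'.card := by
          rw [Finset.card_image_of_injective _ (add_left_injective p)]
          have : W'.card = W''.card := by
            rw [hW'', Finset.card_image_of_injective _ (sub_left_injective)]
          rw [this]
          exact Finset.card_lt_card hT
        have hTss : T.image (fun r => r + p) ⊂ W' :=
          Finset.ssubset_iff_subset_ne.mpr ⟨hTsub, fun h => by
            rw [h] at hcard; exact lt_irrefl _ hcard⟩
        obtain ⟨x, hx, hxm⟩ := hW'min _ hTss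
        refine ⟨fun r => x (r + p), hshift p x hx, ?_⟩
        intro r hr
        have : x (r + p) = w (r + p) := hxm (r + p) (by
          simp only [Finset.coe_image, Set.mem_image, Finset.mem_coe]
          exact ⟨r, hr, rfl⟩)
        show x (r + p) = w0 r
        rw [this, hw0]
        simp [hT.subset hr]
      · intro r hr
        rw [hw0]
        simp [hr]
    -- but its shape contains two points at distance ≥ g: contradiction
    have hd1 : dist1 (p - p) (q - p) < g :=
      key _ hoff (p - p) (by rw [hmemW'', sub_add_cancel]; exact hpW')
        (q - p) (by rw [hmemW'', sub_add_cancel]; exact hqW')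
    rw [dist1_sub_right] at hd1
    have hd2 : g ≤ dist1 p q := hdist p hpU q hqV
    omega
end

section
/- If a Z^d shift space X satisfies topological strong spatial mixing, then X is a shift of finite type. Moreover, if X satisfies TSSM with gap g, then X can be defined by a family of forbidden configurations contained in A^{R_g}, where R_g is the ℓ^1-ball of radius g around the origin. -/
lemma dist1_sub {d : ℕ} (p t : Site d) : dist1 (p - t) 0 = dist1 p t := by
  simp [dist1]

/-- The ℓ¹-ball of radius g is finite. -/
lemma ball_finite {d : ℕ} (g : ℕ) : {q : Site d | dist1 q 0 ≤ g}.Finite := by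
  have : {q : Site d | dist1 q 0 ≤ g} ⊆
      Set.pi Set.univ (fun _ : Fin d => Set.Icc (-(g : ℤ)) (g : ℤ)) := by
    intro q hq
    intro i _
    have h1 : (q i - 0).natAbs ≤ ∑ j, (q j - 0).natAbs :=
      Finset.single_le_sum (f := fun j => (q j - 0).natAbs) (by intro j _; positivity)
        (Finset.mem_univ i)
    have h2 : (q i).natAbs ≤ g := by
      simpa using h1.trans hq
    constructor <;> omega
  exact Set.Finite.subset (Set.Finite.pi (fun _ => Set.finite_Icc _ _)) this

/-- Shift of a point of X stays in X. -/
lemma shift_mem {d : ℕ} {A : Type*} [TopologicalSpace A] {X : Set (Site d → A)}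
    (hX : IsShiftSpace X) {x : Site d → A} (hx : x ∈ X) (t : Site d) :
    (fun q => x (q + t)) ∈ X := by
  have := hX.2 t
  rw [← this]
  exact ⟨x, hx, rfl⟩

/-- Key extension lemma via TSSM. -/
lemma tssm_key {d : ℕ} {A : Type*} [TopologicalSpace A] {X : Set (Site d → A)} {g : ℕ}
    (h : TSSM X g) (x : Site d → A)
    (hadm : ∀ t : Site d, ∃ z ∈ X, ∀ q : Site d, dist1 q 0 ≤ g → z (q + t) = x (q + t)) :
    ∀ n : ℕ, ∀ S : Finset (Site d), S.card ≤ n → ∃ y ∈ X, ∀ p ∈ S, y p = x p := by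
  intro n
  induction n with
  | zero =>
    intro S hS
    have hSe : S = ∅ := Finset.card_eq_zero.mp (Nat.le_zero.mp hS)
    obtain ⟨z, hz, -⟩ := hadm 0
    exact ⟨z, hz, by simp [hSe]⟩
  | succ n ih =>
    intro S hS
    by_cases hsmall : ∀ p ∈ S, ∀ q ∈ S, dist1 p q ≤ g
    · -- S is contained in a ball around any of its points
      rcases S.eq_empty_or_nonempty with rfl | ⟨p₀, hp₀⟩
      · obtain ⟨z, hz, -⟩ := hadm 0
        exact ⟨z, hz, by simp⟩
      · obtain ⟨z, hz, hz'⟩ := hadm p₀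
        refine ⟨z, hz, fun p hp => ?_⟩
        have hd : dist1 (p - p₀) 0 ≤ g := by
          rw [dist1_sub]; exact hsmall p hp p₀ hp₀
        have := hz' (p - p₀) hd
        simpa using this
    · push_neg at hsmall
      obtain ⟨p, hp, p', hp', hdist⟩ := hsmall
      have hne : p ≠ p' := by
        intro hEq; subst hEq
        simp [dist1] at hdist
      set Sc : Finset (Site d) := (S.erase p).erase p' with hSc
      have hy₁ : ∃ y ∈ X, ∀ a ∈ S.erase p', y a = x a := by
        apply ih
        have := Finset.card_erase_of_mem hp'
        omega
      have hy₂ : ∃ y ∈ X, ∀ a ∈ S.erase p, y a = x a := by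
        apply ih
        have := Finset.card_erase_of_mem hp
        omega
      obtain ⟨y₁, hy₁X, hy₁a⟩ := hy₁
      obtain ⟨y₂, hy₂X, hy₂a⟩ := hy₂
      have hmain := h {p} (↑Sc) {p'} (Set.finite_singleton p) Sc.finite_toSet
        (Set.finite_singleton p')
        (by
          rw [Set.disjoint_left]
          rintro a rfl ha
          simp [hSc] at ha)
        (by
          rw [Set.disjoint_right]
          rintro a rfl ha
          simp [hSc] at ha)
        (by
          rw [Set.disjoint_left]
          rintro a rfl ha
          simp at ha
          exact hne ha)
        (by
          rintro a rfl' b hb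
          simp at rfl' hb
          subst rfl'; subst hb
          omega)
        x x x
        ⟨y₁, hy₁X, by
          constructor
          · rintro a ha
            simp at ha; rw [ha]
            exact hy₁a p (Finset.mem_erase.mpr ⟨hne, hp⟩)
          · intro a ha
            simp only [Finset.coe_sort_coe, Finset.mem_coe, hSc, Finset.mem_erase] at ha
            exact hy₁a a (Finset.mem_erase.mpr ⟨ha.1, ha.2.2⟩)⟩
        ⟨y₂, hy₂X, by
          constructor
          · intro a ha
            simp only [Finset.mem_coe, hSc, Finset.mem_erase] at ha
            exact hy₂a a (Finset.mem_erase.mpr ⟨ha.2.1, ha.2.2⟩)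
          · rintro a ha
            simp at ha; rw [ha]
            exact hy₂a p' (Finset.mem_erase.mpr ⟨hne.symm, hp'⟩)⟩
      obtain ⟨y, hyX, hyU, hyS, hyV⟩ := hmain
      refine ⟨y, hyX, fun a ha => ?_⟩
      by_cases hap : a = p
      · subst hap; exact hyU a rfl
      by_cases hap' : a = p'
      · subst hap'; exact hyV a rfl
      · exact hyS a (by simp [hSc, Finset.mem_erase, hap, hap', ha])

/-- A shift space satisfying TSSM with gap `g` is a shift of finite type, defined by a
finite family of forbidden configurations on the ℓ¹-ball `R_g` of radius `g` around the
origin (forbidden configurations are normalized to `default` outside `R_g`). -/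
theorem tssm_implies_SFT {d : ℕ} {A : Type*} [Fintype A] [Inhabited A]
    [TopologicalSpace A] [DiscreteTopology A]
    (X : Set (Site d → A)) (hX : IsShiftSpace X) (g : ℕ) (h : TSSM X g) :
    ∃ F : Set (Site d → A), F.Finite ∧
      (∀ f ∈ F, ∀ q : Site d, g < dist1 q 0 → f q = default) ∧
      X = {x | ∀ t : Site d, ∀ f ∈ F, ∃ q : Site d, dist1 q 0 ≤ g ∧ x (q + t) ≠ f q} := by
  classical
  set B : Set (Site d) := {q : Site d | dist1 q 0 ≤ g} with hB
  have hBfin : B.Finite := ball_finite g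
  set F : Set (Site d → A) :=
    {f | (∀ q : Site d, g < dist1 q 0 → f q = default) ∧
      ¬ ∃ y ∈ X, ∀ q ∈ B, y q = f q} with hF
  have hFfin : F.Finite := by
    have hsub : F ⊆ {f : Site d → A | ∀ q ∉ B, f q = default} := by
      intro f hf q hq
      exact hf.1 q (by simpa [hB] using hq)
    refine Set.Finite.subset ?_ hsub
    have : Finite (↥hBfin.toFinset → A) := inferInstance
    apply Set.Finite.of_finite_image (f := fun f (q : ↥hBfin.toFinset) => f (q : Site d))
    · exact Set.Finite.subset (Set.finite_univ) (Set.subset_univ _)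
    · intro f₁ h₁ f₂ h₂ hEq
      funext q
      by_cases hq : q ∈ B
      · have : (⟨q, hBfin.mem_toFinset.mpr hq⟩ : ↥hBfin.toFinset) = ⟨q, _⟩ := rfl
        exact congrFun hEq ⟨q, hBfin.mem_toFinset.mpr hq⟩
      · rw [h₁ q hq, h₂ q hq]
  refine ⟨F, hFfin, fun f hf => hf.1, ?_⟩
  ext x
  constructor
  · -- X ⊆ RHS
    intro hx t f hfF
    by_contra hc
    push_neg at hc
    apply hfF.2
    refine ⟨fun q => x (q + t), shift_mem hX hx t, fun q hq => ?_⟩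
    exact hc q (by simpa [hB] using hq)
  · -- RHS ⊆ X
    intro hx
    -- every ball pattern of x is globally admissible
    have hadm : ∀ t : Site d, ∃ z ∈ X, ∀ q : Site d, dist1 q 0 ≤ g → z (q + t) = x (q + t) := by
      intro t
      set f : Site d → A := fun q => if dist1 q 0 ≤ g then x (q + t) else default with hfdef
      have hfn : f ∉ F := by
        intro hfF
        obtain ⟨q, hq, hne⟩ := hx t f hfF
        exact hne (by simp [hfdef, hq])
      have h1 : ∀ q : Site d, g < dist1 q 0 → f q = default := by
        intro q hq
        simp [hfdef, Nat.not_le.mpr hq]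
      have h2 : ∃ y ∈ X, ∀ q ∈ B, y q = f q := by
        by_contra hc
        exact hfn ⟨h1, hc⟩
      obtain ⟨y, hyX, hy⟩ := h2
      refine ⟨fun q => y (q - t), ?_, fun q hq => ?_⟩
      · have := shift_mem hX hyX (-t)
        simpa [sub_eq_add_neg] using this
      · have := hy q (by simpa [hB] using hq)
        simpa [hfdef, hq] using this
    -- compactness argument
    set C : Finset (Site d) → Set (Site d → A) :=
      fun S => {y ∈ X | ∀ p ∈ S, y p = x p} with hC
    have hCne : ∀ S, (C S).Nonempty := by
      intro S
      obtain ⟨y, hyX, hy⟩ := tssm_key h x hadm S.card S le_rfl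
      exact ⟨y, hyX, hy⟩
    have hCdir : Directed (· ⊇ ·) C := by
      intro S T
      refine ⟨S ∪ T, ?_, ?_⟩
      · intro y hy
        exact ⟨hy.1, fun p hp => hy.2 p (Finset.mem_union_left _ hp)⟩
      · intro y hy
        exact ⟨hy.1, fun p hp => hy.2 p (Finset.mem_union_right _ hp)⟩
    have hCcl : ∀ S, IsClosed (C S) := by
      intro S
      have : C S = X ∩ ⋂ p ∈ S, (fun y : Site d → A => y p) ⁻¹' {x p} := by
        ext y
        simp [hC, Set.mem_iInter]
      rw [this]
      exact hX.1.inter (isClosed_biInter fun p _ =>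
        (isClosed_singleton).preimage (continuous_apply p))
    have hCcp : ∀ S, IsCompact (C S) := fun S => (hCcl S).isCompact
    have hne := IsCompact.nonempty_iInter_of_directed_nonempty_isCompact_isClosed
      C hCdir hCne hCcp hCcl
    obtain ⟨y, hy⟩ := hne
    have hyX : y ∈ X := (Set.mem_iInter.mp hy ∅).1
    have hyx : y = x := by
      funext p
      exact (Set.mem_iInter.mp hy {p}).2 p (Finset.mem_singleton_self p)
    rwa [← hyx]
end

section
/- If a nearest-neighbour Z^d shift of finite type X satisfies single-site fillability (SSF), then X satisfies topological strong spatial mixing with gap g = 2. -/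
def unitVec {d : ℕ} (i : Fin d) : Site d := fun j => if j = i then 1 else 0

/-- The nearest-neighbour SFT defined by the forbidden edge configurations `E i a b`
(meaning the pair `(a, b)` is forbidden on an edge `{p, p + e_i}`). -/
def nnSFT {d : ℕ} {A : Type*} (E : Fin d → A → A → Prop) : Set (Site d → A) :=
  {x | ∀ (p : Site d) (i : Fin d), ¬ E i (x p) (x (p + unitVec i))}

section Dist1

variable {d : ℕ}

lemma dist1_comm (p q : Site d) : dist1 p q = dist1 q p :=
  Finset.sum_congr rfl fun _ _ => by omega

lemma dist1_self (p : Site d) : dist1 p p = 0 := by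
  simp [dist1]

lemma dist1_add_unitVec_self (p : Site d) (i : Fin d) : dist1 (p + unitVec i) p = 1 := by
  simp [dist1, unitVec, apply_ite Int.natAbs]

lemma add_unitVec_ne_self (p : Site d) (i : Fin d) : p + unitVec i ≠ p := fun h => by
  simpa [unitVec] using congrFun h i

lemma finite_setOf_dist1_le (q : Site d) (r : ℕ) : {p : Site d | dist1 p q ≤ r}.Finite := by
  refine (Set.Finite.pi fun i => Set.finite_Icc (q i - r) (q i + r)).subset fun p hp i _ => ?_
  have : (p i - q i).natAbs ≤ r :=
    (Finset.single_le_sum (f := fun j => (p j - q j).natAbs) (fun _ _ => Nat.zero_le _)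
      (Finset.mem_univ i)).trans hp
  constructor <;> omega

end Dist1

def oneNbhd {d : ℕ} (U : Set (Site d)) : Set (Site d) := ⋃ q ∈ U, {p | dist1 p q ≤ 1}

section OneNbhd

variable {d : ℕ} {U V : Set (Site d)}

lemma mem_oneNbhd_of_dist1_le {p q : Site d} (hq : q ∈ U) (h : dist1 p q ≤ 1) : p ∈ oneNbhd U :=
  Set.mem_biUnion hq h

lemma subset_oneNbhd : U ⊆ oneNbhd U := fun p hp =>
  mem_oneNbhd_of_dist1_le hp ((dist1_self p).trans_le zero_le_one)

lemma Set.Finite.oneNbhd (hU : U.Finite) : (oneNbhd U).Finite :=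
  hU.biUnion fun q _ => finite_setOf_dist1_le q 1

lemma disjoint_oneNbhd (h : ∀ p ∈ U, ∀ q ∈ V, 2 ≤ dist1 p q) : Disjoint V (oneNbhd U) :=
  Set.disjoint_left.2 fun p hpV hpU => by
    obtain ⟨q, hqU, hpq : dist1 p q ≤ 1⟩ := Set.mem_iUnion₂.1 hpU
    have := h q hqU p hpV
    rw [dist1_comm] at this
    omega

end OneNbhd

namespace nnSFT

variable {d : ℕ} {A : Type*} (E : Fin d → A → A → Prop)

def AdmissibleOff (F : Set (Site d)) (w : Site d → A) : Prop :=
  ∀ p i, p ∉ F → p + unitVec i ∉ F → ¬ E i (w p) (w (p + unitVec i))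

def SingleSiteFillable : Prop :=
  ∀ η : Site d → A, ∃ a : A, ∀ i : Fin d, ¬ E i a (η (unitVec i)) ∧ ¬ E i (η (-unitVec i)) a

variable {E}

lemma admissibleOff_empty {w : Site d → A} : AdmissibleOff E ∅ w ↔ w ∈ nnSFT E :=
  ⟨fun hw p i => hw p i (Set.notMem_empty p) (Set.notMem_empty _), fun hw p i _ _ => hw p i⟩

lemma AdmissibleOff.update_insert {F : Set (Site d)} {q : Site d} {w : Site d → A} {a : A}
    (hw : AdmissibleOff E (insert q F) w)
    (ha : ∀ i, ¬ E i a (w (q + unitVec i)) ∧ ¬ E i (w (q + -unitVec i)) a) :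
    AdmissibleOff E F (Function.update w q a) := by
  intro p i hp hpi
  by_cases hpq : p = q
  · subst hpq
    rw [Function.update_self, Function.update_of_ne (add_unitVec_ne_self p i)]
    exact (ha i).1
  by_cases hpiq : p + unitVec i = q
  · obtain rfl : p = q + -unitVec i := by rw [← hpiq, add_neg_cancel_right]
    rw [hpiq, Function.update_self, Function.update_of_ne hpq]
    exact (ha i).2
  rw [Function.update_of_ne hpq, Function.update_of_ne hpiq]
  exact hw p i (by simp [hpq, hp]) (by simp [hpiq, hpi])

theorem SingleSiteFillable.exists_mem_eqOn_compl (hE : SingleSiteFillable E)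
    {F : Set (Site d)} (hF : F.Finite) {w : Site d → A} (hw : AdmissibleOff E F w) :
    ∃ x ∈ nnSFT E, Set.EqOn x w Fᶜ := by
  induction F, hF using Set.Finite.induction_on generalizing w with
  | empty => exact ⟨w, admissibleOff_empty.1 hw, Set.eqOn_refl _ _⟩
  | @insert q F _ _ ih =>
    obtain ⟨a, ha⟩ := hE fun r => w (q + r)
    obtain ⟨x, hx, hxw⟩ := ih (hw.update_insert ha)
    refine ⟨x, hx, fun p hp => ?_⟩
    obtain ⟨hpq, hpF⟩ : p ≠ q ∧ p ∉ F := by simpa using hp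
    rw [hxw hpF, Function.update_of_ne hpq]

lemma admissibleOff_piecewise {x y : Site d → A} (hx : x ∈ nnSFT E) (hy : y ∈ nnSFT E)
    {D F : Set (Site d)} [DecidablePred (· ∈ D)]
    (hD : ∀ p ∈ D, p ∉ F → ∀ q ∉ D, dist1 q p ≤ 1 → x p = y p) :
    AdmissibleOff E F (D.piecewise x y) := by
  intro p i hp hpi
  by_cases hpD : p ∈ D <;> by_cases hpiD : p + unitVec i ∈ D
  · simpa [hpD, hpiD] using hx p i
  · have hxy := hD p hpD hp _ hpiD (dist1_add_unitVec_self p i).le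
    simpa [hpD, hpiD, hxy] using hy p i
  · have hxy := hD _ hpiD hpi p hpD (by rw [dist1_comm, dist1_add_unitVec_self])
    simpa [hpD, hpiD, hxy] using hy p i
  · simpa [hpD, hpiD] using hy p i

end nnSFT

theorem ssf_implies_tssm_general {d : ℕ} {A : Type*} (E : Fin d → A → A → Prop)
    (hssf : ∀ η : Site d → A, ∃ a : A,
      ∀ i : Fin d, ¬ E i a (η (unitVec i)) ∧ ¬ E i (η (-unitVec i)) a) :
    TSSM (nnSFT E) 2 := by
  classical
  rintro U S V hU - - - - - hUV u s v ⟨x, hx, hxU, hxS⟩ ⟨y, hy, hyS, hyV⟩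
  set D := oneNbhd U
  have hbd : ∀ p ∈ D, p ∉ D \ (U ∪ S) → ∀ q ∉ D, dist1 q p ≤ 1 → x p = y p := by
    intro p hpD hp q hqD hqp
    have hpUS : p ∈ U ∪ S := by_contra fun h => hp ⟨hpD, h⟩
    have hpS : p ∈ S := hpUS.resolve_left fun hpU => hqD (mem_oneNbhd_of_dist1_le hpU hqp)
    rw [hxS p hpS, hyS p hpS]
  obtain ⟨z, hz, hzw⟩ := nnSFT.SingleSiteFillable.exists_mem_eqOn_compl hssf hU.oneNbhd.sdiff
    (nnSFT.admissibleOff_piecewise hx hy hbd)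
  have hz_of_mem : ∀ p ∈ D, p ∈ U ∪ S → z p = x p := fun p hpD hp => by
    rw [hzw fun h => h.2 hp, Set.piecewise_eq_of_mem _ _ _ hpD]
  have hz_of_notMem : ∀ p ∉ D, z p = y p := fun p hpD => by
    rw [hzw fun h => hpD h.1, Set.piecewise_eq_of_notMem _ _ _ hpD]
  refine ⟨z, hz, fun p hp => ?_, fun p hp => ?_, fun p hp => ?_⟩
  · rw [hz_of_mem p (subset_oneNbhd hp) (.inl hp), hxU p hp]
  · by_cases hpD : p ∈ D
    · rw [hz_of_mem p hpD (.inr hp), hxS p hp]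
    · rw [hz_of_notMem p hpD, hyS p hp]
  · rw [hz_of_notMem p ((disjoint_oneNbhd hUV).notMem_of_mem_left hp), hyV p hp]

/-- Single-site fillability implies topological strong spatial mixing with gap 2. -/
theorem ssf_implies_tssm {d : ℕ} {A : Type*} [Fintype A] (E : Fin d → A → A → Prop)
    (hssf : ∀ η : Site d → A, ∃ a : A,
      ∀ i : Fin d, ¬ E i a (η (unitVec i)) ∧ ¬ E i (η (-unitVec i)) a) :
    TSSM (nnSFT E) 2 :=
  ssf_implies_tssm_general E hssf
end

section
/- Let μ be a shift-invariant Markov random field on A^{Z^d} whose support satisfies topological strong spatial mixing with gap g. Then c_μ := inf{ μ(x(0) | x(S)) : x ∈ supp(μ), S a finite subset of Z^d \ {0} } is strictly positive; in fact c_μ ≥ D_μ(B_g) · |A|^{-2d(2g+1)^{d-1}}, where D_μ(B_g) is the minimum over subsets W of the g-block B_g, boundary conditions δ on ∂W of positive measure, and configurations w on W with μ(w|δ) > 0, of μ(w|δ). -/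
/-!
Given `x` in the support and a finite `S ∌ 0`, let `C = ∂B_g \ S`. Some configuration `η` on `C`
carries at least a `|A|^{-|C|}` share of the mass of `x|_S`, and `|C| ≤ 2d(2g+1)^{d-1}`. TSSM
glues `x(0)`, `x|_S` and `η` into one point `z` of the support. By the Markov property, the
probability of `z|_{B_g \ S}` given `z|_{S ∪ C}` equals its probability given the boundary of
`B_g \ S`, hence is at least `D_μ(B_g)`; and `z|_{B_g \ S}` fixes the value `x(0)` at the origin.
-/

open MeasureTheory

/-- Outer boundary of a set of sites. -/
def bd {d : ℕ} (S : Set (Site d)) : Set (Site d) :=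
  {p | p ∉ S ∧ ∃ q ∈ S, dist1 p q = 1}

/-- Cylinder set: points agreeing with `u` on `S`. -/
def cyl {d : ℕ} {A : Type*} (S : Set (Site d)) (u : Site d → A) : Set (Site d → A) :=
  {x | ∀ p ∈ S, x p = u p}

noncomputable def condR {d : ℕ} {A : Type*} [MeasurableSpace A]
    (μ : Measure (Site d → A)) (E B : Set (Site d → A)) : ℝ :=
  (μ (E ∩ B) / μ B).toReal

def ShiftInvariant {d : ℕ} {A : Type*} [MeasurableSpace A]
    (μ : Measure (Site d → A)) : Prop :=
  ∀ (t : Site d) (E : Set (Site d → A)),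
    μ ((fun (x : Site d → A) (q : Site d) => x (q + t)) ⁻¹' E) = μ E

/-- Markov random field property. -/
def IsMRF {d : ℕ} {A : Type*} [MeasurableSpace A] (μ : Measure (Site d → A)) : Prop :=
  ∀ S : Set (Site d), S.Finite → ∀ u : Site d → A,
    ∀ T : Set (Site d), T.Finite → bd S ⊆ T → Disjoint S T →
    ∀ δ : Site d → A, 0 < μ (cyl T δ) →
      condR μ (cyl S u) (cyl T δ) = condR μ (cyl S u) (cyl (bd S) δ)

/-- The support of `μ`: points all of whose cylinder sets have positive measure. -/
def mrfSupport {d : ℕ} {A : Type*} [MeasurableSpace A]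
    (μ : Measure (Site d → A)) : Set (Site d → A) :=
  {x | ∀ S : Set (Site d), S.Finite → 0 < μ (cyl S x)}

/-- The `g`-block `B_g = {p : |p_i| ≤ g for all i}`. -/
def Bblock (d g : ℕ) : Set (Site d) := {p | ∀ i, (p i).natAbs ≤ g}

/-- `D_μ(B_g)`: the infimum of `μ(w | δ)` over subsets `W ⊆ B_g`, boundary conditions `δ`
on `∂W` of positive measure, and configurations `w` on `W` with `μ(w | δ) > 0`. -/
noncomputable def Dmu {d : ℕ} {A : Type*} [MeasurableSpace A]
    (μ : Measure (Site d → A)) (g : ℕ) : ℝ :=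
  sInf {r : ℝ | ∃ W : Set (Site d), W ⊆ Bblock d g ∧
    ∃ δ : Site d → A, 0 < μ (cyl (bd W) δ) ∧
    ∃ w : Site d → A, 0 < condR μ (cyl W w) (cyl (bd W) δ) ∧
      r = condR μ (cyl W w) (cyl (bd W) δ)}

open Set
open scoped ENNReal

section

variable {d : ℕ} {A : Type*}

section Cylinders

lemma cyl_anti {S T : Set (Site d)} (h : S ⊆ T) (u : Site d → A) : cyl T u ⊆ cyl S u :=
  fun _ hx p hp => hx p (h hp)

lemma cyl_union (S T : Set (Site d)) (u : Site d → A) :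
    cyl (S ∪ T) u = cyl S u ∩ cyl T u := by
  ext y
  simp only [cyl, mem_union, mem_inter_iff, mem_ofPred_eq, or_imp, forall_and]

lemma cyl_congr {S : Set (Site d)} {u v : Site d → A} (h : ∀ p ∈ S, u p = v p) :
    cyl S u = cyl S v := by
  ext y
  simp only [cyl, mem_ofPred_eq]
  exact forall₂_congr fun p hp => by rw [h p hp]

lemma cyl_eq_of_mem {S : Set (Site d)} {u v : Site d → A} (h : v ∈ cyl S u) :
    cyl S v = cyl S u :=
  cyl_congr h

lemma mem_cyl_self (S : Set (Site d)) (u : Site d → A) : u ∈ cyl S u :=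
  fun _ _ => rfl

lemma cyl_empty (u : Site d → A) : cyl ∅ u = univ := by
  simp [cyl]

lemma finite_range_cyl [Finite A] {T : Set (Site d)} (hT : T.Finite) :
    (range (cyl (A := A) T)).Finite := by
  have := hT.to_subtype
  refine (finite_range fun v : T → A => {x : Site d → A | ∀ p : T, x p = v p}).subset ?_
  rintro _ ⟨u, rfl⟩
  exact ⟨fun p => u p, by ext x; simp [cyl]⟩

lemma cyl_eq_biInter (T : Set (Site d)) (u : Site d → A) :
    cyl T u = ⋂ p ∈ T, (fun x : Site d → A => x p) ⁻¹' {u p} := by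
  ext
  simp [cyl]

lemma bd_empty : bd (∅ : Set (Site d)) = ∅ := by
  simp [bd]

lemma bd_sdiff_subset (W S : Set (Site d)) : bd (W \ S) ⊆ S ∪ (bd W \ S) := by
  rintro p ⟨hpW, q, hq, hpq⟩
  by_cases hpS : p ∈ S
  · exact Or.inl hpS
  · exact Or.inr ⟨⟨fun hp => hpW ⟨hp, hpS⟩, q, hq.1, hpq⟩, hpS⟩

end Cylinders

section Topology

variable [TopologicalSpace A] [DiscreteTopology A]

lemma isOpen_cyl {T : Set (Site d)} (hT : T.Finite) (u : Site d → A) : IsOpen (cyl T u) := by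
  rw [cyl_eq_biInter]
  exact hT.isOpen_biInter fun p _ => (isOpen_discrete _).preimage (continuous_apply p)

lemma isClosed_cyl (T : Set (Site d)) (u : Site d → A) : IsClosed (cyl T u) := by
  rw [cyl_eq_biInter]
  exact isClosed_biInter fun p _ => (isClosed_discrete _).preimage (continuous_apply p)

/-- The cylinders on `T` partition the space, so any union of them is open. -/
lemma isOpen_setOf_cyl {T : Set (Site d)} (hT : T.Finite) (P : Set (Site d → A) → Prop) :
    IsOpen {y | P (cyl T y)} :=
  isOpen_iff_forall_mem_open.2 fun y hy =>
    ⟨cyl T y, fun z hz => by rwa [mem_ofPred_eq, cyl_eq_of_mem hz], isOpen_cyl hT y,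
      mem_cyl_self T y⟩

lemma isClosed_setOf_cyl {T : Set (Site d)} (hT : T.Finite) (P : Set (Site d → A) → Prop) :
    IsClosed {y | P (cyl T y)} :=
  isOpen_compl_iff.1 (isOpen_setOf_cyl hT (¬ P ·))

end Topology

section Geometry

lemma natAbs_sub_le_dist1 (p q : Site d) (i : Fin d) : (p i - q i).natAbs ≤ dist1 p q :=
  Finset.single_le_sum (f := fun i => (p i - q i).natAbs) (fun _ _ => Nat.zero_le _)
    (Finset.mem_univ i)

lemma eq_of_dist1_eq_one {p q : Site d} (h : dist1 p q = 1) {i j : Fin d} (hi : p i ≠ q i)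
    (hji : j ≠ i) : p j = q j := by
  by_contra hj
  have := Finset.add_le_sum (f := fun i => (p i - q i).natAbs) (fun _ _ => Nat.zero_le _)
    (Finset.mem_univ i) (Finset.mem_univ j) hji.symm
  simp only [dist1] at h
  omega

lemma Bblock_mono (d : ℕ) : Monotone (Bblock d) :=
  fun _ _ hgh _ hp i => (hp i).trans hgh

lemma Bblock_finite (d g : ℕ) : (Bblock d g).Finite := by
  refine (Finite.pi' fun _ : Fin d => finite_Icc (-(g : ℤ)) g).subset fun p hp i => ?_
  have := hp i
  simp only [mem_Icc]
  omega

lemma exists_subset_Bblock {S : Set (Site d)} (hS : S.Finite) : ∃ g, S ⊆ Bblock d g :=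
  ⟨hS.toFinset.sup fun p => Finset.univ.sup fun i => (p i).natAbs, fun p hp i =>
    (Finset.le_sup (f := fun i => (p i).natAbs) (Finset.mem_univ i)).trans
      (Finset.le_sup (f := fun p => Finset.univ.sup fun i => (p i).natAbs)
        (hS.mem_toFinset.2 hp))⟩

lemma lt_dist1_zero_of_notMem_Bblock {g : ℕ} {q : Site d} (hq : q ∉ Bblock d g) :
    g < dist1 0 q := by
  obtain ⟨i, hi⟩ : ∃ i, ¬ (q i).natAbs ≤ g := by simpa [Bblock] using hq
  have := natAbs_sub_le_dist1 0 q i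
  simp only [Pi.zero_apply, zero_sub, Int.natAbs_neg] at this
  omega

lemma zero_mem_Bblock (d g : ℕ) : (0 : Site d) ∈ Bblock d g :=
  fun i => by simp

lemma bd_subset_Bblock_succ {g : ℕ} {W : Set (Site d)} (hW : W ⊆ Bblock d g) :
    bd W ⊆ Bblock d (g + 1) := by
  rintro p ⟨-, q, hq, hpq⟩ i
  have := natAbs_sub_le_dist1 p q i
  have := hW hq i
  omega

lemma finite_bd_of_subset_Bblock {g : ℕ} {W : Set (Site d)} (hW : W ⊆ Bblock d g) :
    (bd W).Finite :=
  (Bblock_finite d (g + 1)).subset (bd_subset_Bblock_succ hW)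

/-- A site of `∂B_g` lies on one of the `2d` faces `p i = ±(g + 1)`, each having
`(2g+1)^(d-1)` sites. -/
lemma ncard_bd_Bblock_le (d g : ℕ) : (bd (Bblock d g)).ncard ≤ 2 * d * (2 * g + 1) ^ (d - 1) := by
  classical
  let face : (Σ ib : Fin d × Bool, {j // j ≠ ib.1} → Icc (-(g : ℤ)) g) → Site d :=
    fun ⟨⟨i, b⟩, v⟩ j => if h : j = i then (if b then g + 1 else -(g + 1)) else v ⟨j, h⟩
  have hcover : bd (Bblock d g) ⊆ range face := by
    rintro p ⟨hp, q, hq, hpq⟩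
    obtain ⟨i, hi⟩ : ∃ i, ¬ (p i).natAbs ≤ g := by simpa [Bblock] using hp
    have hpqi : p i ≠ q i := fun h => hi (h ▸ hq i)
    have hpj : ∀ j, j ≠ i → p j = q j := fun j hj => eq_of_dist1_eq_one hpq hpqi hj
    have := natAbs_sub_le_dist1 p q i
    have := hq i
    refine ⟨⟨⟨i, decide (0 < p i)⟩, fun j => ⟨p j, ?_⟩⟩, funext fun j => ?_⟩
    · have := hpj j j.2
      have := hq j
      simp only [mem_Icc]
      omega
    · by_cases hj : j = i
      · subst hj
        by_cases h0 : 0 < p j <;> simp [face, h0] <;> omega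
      · simp [face, hj]
  calc (bd (Bblock d g)).ncard ≤ (range face).ncard := ncard_le_ncard hcover (finite_range _)
    _ ≤ Nat.card (Σ ib : Fin d × Bool, {j // j ≠ ib.1} → Icc (-(g : ℤ)) g) :=
      Finite.card_range_le face
    _ = 2 * d * (2 * g + 1) ^ (d - 1) := by
      simp
      rw [show ((g : ℤ) + 1 + g).toNat = 2 * g + 1 by omega]
      ring

end Geometry

section Measure

variable [MeasurableSpace A] (μ : Measure (Site d → A))

lemma exists_measure_le_card_pow_mul [Fintype A] [Nonempty A] (E : Set (Site d → A))
    {C : Set (Site d)} (hC : C.Finite) :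
    ∃ η : Site d → A, μ E ≤ (Fintype.card A : ℝ≥0∞) ^ C.ncard * μ (E ∩ cyl C η) := by
  classical
  lift C to Finset (Site d) using hC
  let extend : (C → A) → Site d → A := fun v p =>
    if h : p ∈ C then v ⟨p, h⟩ else Classical.arbitrary A
  obtain ⟨v₀, -, hv₀⟩ := Finset.exists_max_image Finset.univ
    (fun v => μ (E ∩ cyl C (extend v))) Finset.univ_nonempty
  have hcover : E ⊆ ⋃ v : C → A, E ∩ cyl C (extend v) := fun y hy =>
    mem_iUnion.2 ⟨fun p => y p, hy, fun p hp => by simp [extend, Finset.mem_coe.1 hp]⟩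
  refine ⟨extend v₀, ?_⟩
  calc μ E ≤ ∑ v : C → A, μ (E ∩ cyl C (extend v)) :=
        (measure_mono hcover).trans (measure_iUnion_fintype_le μ _)
    _ ≤ ∑ _v : C → A, μ (E ∩ cyl C (extend v₀)) :=
        Finset.sum_le_sum fun v _ => hv₀ v (Finset.mem_univ v)
    _ = (Fintype.card A : ℝ≥0∞) ^ (C : Set (Site d)).ncard * μ (E ∩ cyl C (extend v₀)) := by
        simp [Finset.sum_const, ncard_coe_finset]

lemma exists_measure_cyl_le_card_pow_mul [Fintype A] (G : Set (Site d)) (f : Site d → A)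
    {C : Set (Site d)} (hC : C.Finite) :
    ∃ f' : Site d → A, (∀ p ∈ G, f' p = f p) ∧
      μ (cyl G f) ≤ (Fintype.card A : ℝ≥0∞) ^ C.ncard * μ (cyl (G ∪ C) f') := by
  classical
  have : Nonempty A := ⟨f 0⟩
  obtain ⟨η, hη⟩ := exists_measure_le_card_pow_mul μ (cyl G f) hC
  refine ⟨G.piecewise f η, fun p hp => piecewise_eq_of_mem G f η hp, hη.trans ?_⟩
  gcongr
  rintro y ⟨hyG, hyC⟩ p (hp | hp)
  · rw [hyG p hp, piecewise_eq_of_mem G f η hp]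
  · by_cases hpG : p ∈ G
    · rw [hyG p hpG, piecewise_eq_of_mem G f η hpG]
    · rw [hyC p hp, piecewise_eq_of_notMem G f η hpG]

lemma exists_cyl_union_pos [Finite A] {G : Set (Site d)} {f : Site d → A}
    (hf : 0 < μ (cyl G f)) {C : Set (Site d)} (hC : C.Finite) :
    ∃ f' ∈ cyl G f, 0 < μ (cyl (G ∪ C) f') := by
  cases nonempty_fintype A
  obtain ⟨f', hf', hle⟩ := exists_measure_cyl_le_card_pow_mul μ G f hC
  exact ⟨f', hf', (CanonicallyOrderedAdd.mul_pos.1 (hf.trans_le hle)).2⟩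

/-- The positive cylinders containing `f` on `F` and on ever larger blocks form a decreasing
sequence of nonempty closed sets in the compact space `A^{ℤ^d}` (`A` discrete). -/
lemma exists_mem_mrfSupport_of_cyl_pos [Finite A] {F : Set (Site d)} (hF : F.Finite)
    {f : Site d → A} (hf : 0 < μ (cyl F f)) :
    ∃ z ∈ mrfSupport μ, ∀ p ∈ F, z p = f p := by
  let : TopologicalSpace A := ⊥
  have : DiscreteTopology A := ⟨rfl⟩
  let K : ℕ → Set (Site d → A) := fun n => cyl F f ∩ {y | 0 < μ (cyl (F ∪ Bblock d n) y)}
  have hK_anti : ∀ n, K (n + 1) ⊆ K n := fun n y ⟨hyF, hy⟩ =>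
    ⟨hyF, hy.trans_le (measure_mono (cyl_anti
      (union_subset_union_right F (Bblock_mono d n.le_succ)) y))⟩
  have hK_closed : ∀ n, IsClosed (K n) := fun n =>
    (isClosed_cyl F f).inter (isClosed_setOf_cyl (hF.union (Bblock_finite d n)) (0 < μ ·))
  obtain ⟨z, hz⟩ := IsCompact.nonempty_iInter_of_sequence_nonempty_isCompact_isClosed K hK_anti
    (fun n => exists_cyl_union_pos μ hf (Bblock_finite d n)) (hK_closed 0).isCompact hK_closed
  refine ⟨z, fun S hS => ?_, (mem_iInter.1 hz 0).1⟩
  obtain ⟨n, hn⟩ := exists_subset_Bblock hS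
  exact (mem_iInter.1 hz n).2.trans_le (measure_mono (cyl_anti (hn.trans subset_union_right) z))

end Measure

section ConditionalProbability

variable [MeasurableSpace A] {μ : Measure (Site d → A)}

lemma condR_eq_measureReal_div (μ : Measure (Site d → A)) (E F : Set (Site d → A)) :
    condR μ E F = μ.real (E ∩ F) / μ.real F := by
  simp only [condR, ENNReal.toReal_div, measureReal_def]

lemma condR_pos [IsFiniteMeasure μ] {E F : Set (Site d → A)} (h : 0 < μ (E ∩ F)) :
    0 < condR μ E F := by
  rw [condR_eq_measureReal_div]
  exact div_pos (ENNReal.toReal_pos h.ne' (measure_ne_top μ _)) <|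
    ENNReal.toReal_pos (h.trans_le (measure_mono inter_subset_right)).ne' (measure_ne_top μ _)

lemma condR_mul_inv_le [IsFiniteMeasure μ] {E F E' F' : Set (Site d → A)}
    (hsub : E' ∩ F' ⊆ E ∩ F) (hF : 0 < μ F) {c : ℕ} (hmass : μ F ≤ c * μ F') :
    condR μ E' F' * (c : ℝ)⁻¹ ≤ condR μ E F := by
  have hF : 0 < μ.real F := ENNReal.toReal_pos hF.ne' (measure_ne_top μ _)
  have hmass : μ.real F ≤ c * μ.real F' := by
    simpa [measureReal_def] using ENNReal.toReal_mono (by finiteness) hmass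
  rw [condR_eq_measureReal_div, condR_eq_measureReal_div]
  calc μ.real (E' ∩ F') / μ.real F' * (c : ℝ)⁻¹ = μ.real (E' ∩ F') / (c * μ.real F') := by
        rw [← div_eq_mul_inv, div_div, mul_comm]
    _ ≤ μ.real (E' ∩ F') / μ.real F :=
        div_le_div_of_nonneg_left measureReal_nonneg hF hmass
    _ ≤ μ.real (E ∩ F) / μ.real F := div_le_div_of_nonneg_right (measureReal_mono hsub) hF.le

end ConditionalProbability

section Dmu

variable [MeasurableSpace A] {μ : Measure (Site d → A)}

lemma Dmu_le_condR {g : ℕ} {W : Set (Site d)} (hW : W ⊆ Bblock d g) {δ w : Site d → A}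
    (hδ : 0 < μ (cyl (bd W) δ)) (hw : 0 < condR μ (cyl W w) (cyl (bd W) δ)) :
    Dmu μ g ≤ condR μ (cyl W w) (cyl (bd W) δ) :=
  csInf_le ⟨0, by rintro _ ⟨_, -, _, -, _, hr, rfl⟩; exact hr.le⟩ ⟨W, hW, δ, hδ, w, hw, rfl⟩

/-- Only the finitely many cylinders on subsets of `B_g` and their boundaries enter `D_μ(B_g)`,
so the infimum is a minimum of positive numbers. -/
lemma Dmu_pos [Finite A] [IsFiniteMeasure μ] [NeZero μ] (g : ℕ) : 0 < Dmu μ g := by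
  have : Nonempty (Site d → A) := μ.nonempty_of_neZero
  let u : Site d → A := Classical.arbitrary _
  set D := {r : ℝ | ∃ W : Set (Site d), W ⊆ Bblock d g ∧
    ∃ δ : Site d → A, 0 < μ (cyl (bd W) δ) ∧
    ∃ w : Site d → A, 0 < condR μ (cyl W w) (cyl (bd W) δ) ∧
      r = condR μ (cyl W w) (cyl (bd W) δ)}
  have hone : condR μ (cyl ∅ u) (cyl (bd ∅) u) = 1 := by
    simp [condR, bd_empty, cyl_empty, ENNReal.div_self (NeZero.ne (μ univ))]
  have hne : D.Nonempty :=
    ⟨1, ∅, empty_subset _, u, by simp [bd_empty, cyl_empty, NeZero.ne μ], u, hone ▸ one_pos,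
      hone.symm⟩
  have hfin : D.Finite := by
    refine ((Bblock_finite d g).finite_subsets.biUnion fun W hW =>
      (finite_range_cyl ((Bblock_finite d g).subset hW)).image2 (condR μ)
        (finite_range_cyl (finite_bd_of_subset_Bblock hW))).subset ?_
    rintro _ ⟨W, hW, δ, -, w, -, rfl⟩
    exact mem_biUnion hW ⟨_, mem_range_self w, _, mem_range_self δ, rfl⟩
  obtain ⟨W, -, δ, -, w, hw, hr⟩ := hne.csInf_mem hfin
  change 0 < sInf D
  exact hr ▸ hw

lemma Dmu_le_condR_of_isMRF [IsFiniteMeasure μ] (hmrf : IsMRF μ) {z : Site d → A}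
    (hz : z ∈ mrfSupport μ) {g : ℕ} {W T : Set (Site d)} (hW : W ⊆ Bblock d g) (hT : T.Finite)
    (hbd : bd W ⊆ T) (hWT : Disjoint W T) :
    Dmu μ g ≤ condR μ (cyl W z) (cyl T z) := by
  have hWfin : W.Finite := (Bblock_finite d g).subset hW
  have hbdfin := finite_bd_of_subset_Bblock hW
  rw [hmrf W hWfin z T hT hbd hWT z (hz T hT)]
  refine Dmu_le_condR hW (hz _ hbdfin) (condR_pos ?_)
  rw [← cyl_union]
  exact hz _ (hWfin.union hbdfin)

end Dmu

/-- TSSM applied to `{0}`, `S ∩ B_g` and `(S \ B_g) ∪ V`: sites outside `B_g` are at distance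
more than `g` from the origin. -/
lemma TSSM.exists_glue_origin {X : Set (Site d → A)} {g : ℕ} (htssm : TSSM X g)
    {x y : Site d → A} (hx : x ∈ X) (hy : y ∈ X) {S V : Set (Site d)} (hS : S.Finite)
    (hV : V.Finite) (h0S : 0 ∉ S) (hVB : Disjoint V (Bblock d g)) (hxy : ∀ p ∈ S, y p = x p) :
    ∃ z ∈ X, z 0 = x 0 ∧ (∀ p ∈ S, z p = x p) ∧ ∀ p ∈ V, z p = y p := by
  have hfar : ∀ q ∈ (S \ Bblock d g) ∪ V, q ∉ Bblock d g := by
    rintro q (hq | hq)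
    exacts [hq.2, disjoint_left.1 hVB hq]
  obtain ⟨z, hz, hz0, hzS, hzV⟩ := htssm {0} (S ∩ Bblock d g) ((S \ Bblock d g) ∪ V)
    (finite_singleton 0) (hS.inter_of_left _) (hS.sdiff.union hV)
    (disjoint_singleton_left.2 fun h => h0S h.1)
    (disjoint_left.2 fun q hq hq' => hfar q hq' hq.2)
    (disjoint_singleton_left.2 fun h => hfar 0 h (zero_mem_Bblock d g))
    (fun p hp q hq => hp ▸ (lt_dist1_zero_of_notMem_Bblock (hfar q hq)).le) x x y
    ⟨x, hx, fun _ _ => rfl, fun _ _ => rfl⟩ ⟨y, hy, fun p hp => hxy p hp.1, fun _ _ => rfl⟩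
  refine ⟨z, hz, hz0 0 rfl, fun p hp => ?_, fun p hp => hzV p (Or.inr hp)⟩
  by_cases hpB : p ∈ Bblock d g
  · exact hzS p ⟨hp, hpB⟩
  · exact (hzV p (Or.inl ⟨hp, hpB⟩)).trans (hxy p hp)

lemma TSSM.exists_mem_mrfSupport_measure_cyl_le [Fintype A] [MeasurableSpace A]
    {μ : Measure (Site d → A)} {g : ℕ} (htssm : TSSM (mrfSupport μ) g) {x : Site d → A}
    (hx : x ∈ mrfSupport μ) {S : Set (Site d)} (hS : S.Finite) (h0S : 0 ∉ S) :
    ∃ z ∈ mrfSupport μ, z 0 = x 0 ∧ (∀ p ∈ S, z p = x p) ∧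
      μ (cyl S x) ≤ (Fintype.card A ^ (2 * d * (2 * g + 1) ^ (d - 1)) : ℕ) *
        μ (cyl (S ∪ (bd (Bblock d g) \ S)) z) := by
  set C := bd (Bblock d g) \ S
  have hbd := finite_bd_of_subset_Bblock (subset_refl (Bblock d g))
  have hC : C.Finite := hbd.sdiff
  obtain ⟨f, hf, hmass⟩ := exists_measure_cyl_le_card_pow_mul μ S x hC
  obtain ⟨y, hy, hyf⟩ := exists_mem_mrfSupport_of_cyl_pos μ (hS.union hC)
    (CanonicallyOrderedAdd.mul_pos.1 ((hx S hS).trans_le hmass)).2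
  obtain ⟨z, hz, hz0, hzS, hzC⟩ := htssm.exists_glue_origin hx hy hS hC h0S
    (disjoint_left.2 fun p hp hpB => hp.1.1 hpB) fun p hp => (hyf p (Or.inl hp)).trans (hf p hp)
  refine ⟨z, hz, hz0, hzS, hmass.trans ?_⟩
  have hzf : cyl (S ∪ C) z = cyl (S ∪ C) f := cyl_congr fun p hp => hp.elim
    (fun hp => (hzS p hp).trans (hf p hp).symm) fun hp => (hzC p hp).trans (hyf p (Or.inr hp))
  rw [hzf]
  push_cast
  gcongr
  · exact_mod_cast Fintype.card_pos_iff.2 ⟨x 0⟩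
  · exact (ncard_le_ncard sdiff_subset hbd).trans (ncard_bd_Bblock_le d g)

end

theorem tssm_implies_cmu_pos_general {d : ℕ} {A : Type*} [Fintype A] [MeasurableSpace A]
    (μ : Measure (Site d → A)) [IsProbabilityMeasure μ]
    (hmrf : IsMRF μ)
    (g : ℕ) (htssm : TSSM (mrfSupport μ) g) :
    0 < Dmu μ g * ((Fintype.card A : ℝ) ^ (2 * d * (2 * g + 1) ^ (d - 1)))⁻¹ ∧
    ∀ x ∈ mrfSupport μ, ∀ S : Set (Site d), S.Finite → (0 : Site d) ∉ S →
      Dmu μ g * ((Fintype.card A : ℝ) ^ (2 * d * (2 * g + 1) ^ (d - 1)))⁻¹ ≤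
        condR μ (cyl {(0 : Site d)} x) (cyl S x) := by
  have : Nonempty A := ⟨(μ.nonempty_of_neZero.some : Site d → A) 0⟩
  refine ⟨mul_pos (Dmu_pos g) (by positivity), fun x hx S hS h0S => ?_⟩
  set B := Bblock d g
  set C := bd B \ S
  obtain ⟨z, hz, hz0, hzS, hmass⟩ := htssm.exists_mem_mrfSupport_measure_cyl_le hx hS h0S
  have hCfin : C.Finite := (finite_bd_of_subset_Bblock (subset_refl B)).sdiff
  have hD : Dmu μ g ≤ condR μ (cyl (B \ S) z) (cyl (S ∪ C) z) :=
    Dmu_le_condR_of_isMRF hmrf hz sdiff_subset (hS.union hCfin) (bd_sdiff_subset B S)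
      (disjoint_left.2 fun p hp hp' => hp'.elim hp.2 fun h => h.1.1 hp.1)
  have hsub : cyl (B \ S) z ∩ cyl (S ∪ C) z ⊆ cyl {0} x ∩ cyl S x := by
    rintro y ⟨hyW, hyT⟩
    refine ⟨fun p hp => ?_, fun p hp => (hyT p (Or.inl hp)).trans (hzS p hp)⟩
    rw [mem_singleton_iff.1 hp, hyW 0 ⟨zero_mem_Bblock d g, h0S⟩, hz0]
  calc Dmu μ g * ((Fintype.card A : ℝ) ^ (2 * d * (2 * g + 1) ^ (d - 1)))⁻¹
      ≤ condR μ (cyl (B \ S) z) (cyl (S ∪ C) z) *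
          ((Fintype.card A ^ (2 * d * (2 * g + 1) ^ (d - 1)) : ℕ) : ℝ)⁻¹ := by
        push_cast
        gcongr
    _ ≤ condR μ (cyl {0} x) (cyl S x) := condR_mul_inv_le hsub (hx S hS) hmass

/-- If the support of a shift-invariant MRF satisfies TSSM with gap `g`, then the uniform
bound `c_μ` on conditional probabilities of a single site given any finite set not containing
it is at least `D_μ(B_g) · |A|^{-2d(2g+1)^{d-1}} > 0`. -/
theorem tssm_implies_cmu_pos {d : ℕ} {A : Type*} [Fintype A] [MeasurableSpace A]
    (μ : Measure (Site d → A)) [IsProbabilityMeasure μ]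
    (hinv : ShiftInvariant μ) (hmrf : IsMRF μ)
    (g : ℕ) (htssm : TSSM (mrfSupport μ) g) :
    0 < Dmu μ g * ((Fintype.card A : ℝ) ^ (2 * d * (2 * g + 1) ^ (d - 1)))⁻¹ ∧
    ∀ x ∈ mrfSupport μ, ∀ S : Set (Site d), S.Finite → (0 : Site d) ∉ S →
      Dmu μ g * ((Fintype.card A : ℝ) ^ (2 * d * (2 * g + 1) ^ (d - 1)))⁻¹ ≤
        condR μ (cyl {(0 : Site d)} x) (cyl S x) :=
  tssm_implies_cmu_pos_general μ hmrf g htssm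
end

section
/- The Z^2 4-checkerboard shift C_2(4) (proper 4-colourings of Z^2) does not satisfy topological strong spatial mixing for any gap g. Specifically, for each g, with U = {(-2g,0)}, V = {(2g,0)}, S = [-2g,2g] × {-1,1}, u = 3, v = 4, and s the configuration alternating 1,2 on the top row and 2,1 on the bottom row (s((i,j)) = 1 if (j=1 and i even) or (j=-1 and i odd), else 2), the configurations us and sv are globally admissible but usv is not. -/
/-- The ℤ² 4-checkerboard: proper 4-colourings of ℤ² (colours `0,1,2,3` standing
for the paper's `1,2,3,4`). -/
def C24 : Set (Site 2 → Fin 4) :=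
  {x | ∀ (p : Site 2) (i : Fin 2), x p ≠ x (p + unitVec i)}

/-- The corridor `S = [-2g, 2g] × {-1, 1}`. -/
def corridor (g : ℕ) : Set (Site 2) :=
  {p | -(2 * (g : ℤ)) ≤ p 0 ∧ p 0 ≤ 2 * (g : ℤ) ∧ (p 1 = -1 ∨ p 1 = 1)}

/-- The configuration `s` alternating colours `1, 2` (here `0, 1`) on the two rows. -/
def corridorConf : Site 2 → Fin 4 :=
  fun p => if (p 1 = 1 ∧ Even (p 0)) ∨ (p 1 = -1 ∧ Odd (p 0)) then 0 else 1

/-! ### Auxiliary material -/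

/-- A global proper colouring: rows with odd `y` use colours `0, 1` (in a pattern
matching `corridorConf` on the corridor), rows with even `y` use colours `c, d`. -/
def col (c d : Fin 4) : Site 2 → Fin 4 :=
  fun p => if p 1 % 2 = 1 ∨ p 1 % 2 = -1 then (if (p 0 + (p 1 - 1) / 2) % 2 = 0 then 0 else 1)
           else (if p 0 % 2 = 0 then c else d)

lemma coord00 (p : Site 2) : (p + unitVec (0 : Fin 2)) 0 = p 0 + 1 := by simp [unitVec]
lemma coord01 (p : Site 2) : (p + unitVec (0 : Fin 2)) 1 = p 1 := by simp [unitVec]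
lemma coord10 (p : Site 2) : (p + unitVec (1 : Fin 2)) 0 = p 0 := by simp [unitVec]
lemma coord11 (p : Site 2) : (p + unitVec (1 : Fin 2)) 1 = p 1 + 1 := by simp [unitVec]

lemma fin_two (i : Fin 2) : i = 0 ∨ i = 1 := by
  fin_cases i
  exacts [Or.inl rfl, Or.inr rfl]

lemma col_mem_aux (c d : Fin 4) (hc0 : c ≠ 0) (hc1 : c ≠ 1) (hd0 : d ≠ 0) (hd1 : d ≠ 1)
    (hcd : c ≠ d) : col c d ∈ C24 := by
  intro p i
  rcases fin_two i with rfl | rfl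
  · simp only [col, coord00, coord01]
    split_ifs <;>
      first
        | exact hcd | exact Ne.symm hcd
        | exact hc0 | exact hc1 | exact hd0 | exact hd1
        | exact Ne.symm hc0 | exact Ne.symm hc1 | exact Ne.symm hd0 | exact Ne.symm hd1
        | decide | (exfalso; omega)
  · simp only [col, coord10, coord11]
    split_ifs <;>
      first
        | exact hcd | exact Ne.symm hcd
        | exact hc0 | exact hc1 | exact hd0 | exact hd1
        | exact Ne.symm hc0 | exact Ne.symm hc1 | exact Ne.symm hd0 | exact Ne.symm hd1
        | decide | (exfalso; omega)

lemma col_corridor (c d : Fin 4) (g : ℕ) :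
    ∀ p ∈ corridor g, col c d p = corridorConf p := by
  intro p hp
  obtain ⟨-, -, h | h⟩ := hp <;>
    simp only [col, corridorConf, h, Int.even_iff, Int.odd_iff] <;>
    norm_num <;> split_ifs <;> first | rfl | (exfalso; omega)

lemma col_at (c d : Fin 4) (a : ℤ) (ha : a % 2 = 0) : col c d ![a, 0] = c := by
  simp only [col, Matrix.cons_val_zero, Matrix.cons_val_one, Matrix.head_cons]
  norm_num [ha]

/-- Values of `corridorConf` on the two rows. -/
lemma conf_top (a : ℤ) : corridorConf ![a, 1] = if a % 2 = 0 then 0 else 1 := by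
  simp only [corridorConf, Matrix.cons_val_zero, Matrix.cons_val_one, Matrix.head_cons,
    Int.even_iff, Int.odd_iff]
  norm_num

lemma conf_bot (a : ℤ) : corridorConf ![a, -1] = if a % 2 = 0 then 1 else 0 := by
  simp only [corridorConf, Matrix.cons_val_zero, Matrix.cons_val_one, Matrix.head_cons,
    Int.even_iff, Int.odd_iff]
  norm_num
  split_ifs <;> first | rfl | omega

lemma vec_add_unit0 (a b : ℤ) : (![a, b] : Site 2) + unitVec 0 = ![a + 1, b] := by
  funext j
  rcases fin_two j with rfl | rfl
  · rw [coord00]; simp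
  · rw [coord01]; simp

lemma vec_add_unit1 (a b : ℤ) : (![a, b] : Site 2) + unitVec 1 = ![a, b + 1] := by
  funext j
  rcases fin_two j with rfl | rfl
  · rw [coord10]; simp
  · rw [coord11]; simp

lemma fin4_eq_two (y : Fin 4) (h0 : y ≠ 0) (h1 : y ≠ 1) (h3 : y ≠ 3) : y = 2 := by
  fin_cases y <;> simp_all
lemma fin4_eq_three (y : Fin 4) (h0 : y ≠ 0) (h1 : y ≠ 1) (h2 : y ≠ 2) : y = 3 := by
  fin_cases y <;> simp_all

/-- In any colouring extending `corridorConf` on the corridor, the colours on the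
middle row are forced to alternate between `2` and `3`. -/
lemma forced (g : ℕ) (x : Site 2 → Fin 4) (hx : x ∈ C24)
    (hs : ∀ p ∈ corridor g, x p = corridorConf p)
    (h0 : x ![-(2 * (g : ℤ)), 0] = 2) :
    ∀ k : ℕ, k ≤ 4 * g → x ![-(2 * (g : ℤ)) + k, 0] = if k % 2 = 0 then 2 else 3 := by
  intro k
  induction k with
  | zero => intro _; simpa using h0
  | succ n ih =>
    intro hk
    have hn := ih (by omega)
    set a : ℤ := -(2 * (g : ℤ)) + (n + 1 : ℕ) with hadef
    have ha : a = -(2 * (g : ℤ)) + n + 1 := by push_cast [hadef]; ring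
    -- corridor memberships
    have htopmem : (![a, 1] : Site 2) ∈ corridor g := by
      refine ⟨?_, ?_, Or.inr ?_⟩ <;> simp <;> omega
    have hbotmem : (![a, -1] : Site 2) ∈ corridor g := by
      refine ⟨?_, ?_, Or.inl ?_⟩ <;> simp <;> omega
    have htop : x ![a, 1] = if a % 2 = 0 then 0 else 1 := by
      rw [hs _ htopmem, conf_top]
    have hbot : x ![a, -1] = if a % 2 = 0 then 1 else 0 := by
      rw [hs _ hbotmem, conf_bot]
    -- neighbour constraints
    have hvert : x ![a, 0] ≠ x ![a, 1] := by
      have := hx ![a, 0] 1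
      rwa [vec_add_unit1, show (0 : ℤ) + 1 = 1 from rfl] at this
    have hvert' : x ![a, -1] ≠ x ![a, 0] := by
      have := hx ![a, -1] 1
      rwa [vec_add_unit1, show (-1 : ℤ) + 1 = 0 by ring] at this
    have hhor : x ![a - 1, 0] ≠ x ![a, 0] := by
      have := hx ![a - 1, 0] 0
      rwa [vec_add_unit0, show a - 1 + 1 = a by ring] at this
    have hprev : x ![a - 1, 0] = if n % 2 = 0 then 2 else 3 := by
      have : (-(2 * (g : ℤ)) + n) = a - 1 := by omega
      rw [← this]; exact hn
    rcases Nat.even_or_odd n with he | he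
    · have hne : n % 2 = 0 := Nat.even_iff.mp he
      have hpar : a % 2 ≠ 0 := by omega
      rw [if_neg hpar] at htop
      rw [if_neg hpar] at hbot
      rw [if_neg (by omega : ¬ (n + 1) % 2 = 0)]
      rw [if_pos hne] at hprev
      exact fin4_eq_three _ (hbot ▸ hvert'.symm) (htop ▸ hvert) (hprev ▸ hhor.symm)
    · have hne : n % 2 = 1 := Nat.odd_iff.mp he
      have hpar : a % 2 = 0 := by omega
      rw [if_pos hpar] at htop
      rw [if_pos hpar] at hbot
      rw [if_pos (by omega : (n + 1) % 2 = 0)]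
      rw [if_neg (by omega : ¬ n % 2 = 0)] at hprev
      exact fin4_eq_two _ (htop ▸ hvert) (hbot ▸ hvert'.symm) (hprev ▸ hhor.symm)

lemma not_usv (g : ℕ) :
    ¬ ∃ x ∈ C24, x ![-(2 * (g : ℤ)), 0] = 2 ∧ (∀ p ∈ corridor g, x p = corridorConf p) ∧
        x ![2 * (g : ℤ), 0] = 3 := by
  rintro ⟨x, hx, h2, hs, h3⟩
  have h := forced g x hx hs h2 (4 * g) le_rfl
  rw [if_pos (by omega)] at h
  have he : -(2 * (g : ℤ)) + ((4 * g : ℕ) : ℤ) = 2 * (g : ℤ) := by push_cast; ring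
  rw [he] at h
  rw [h] at h3
  exact absurd h3 (by decide)

lemma corridor_finite (g : ℕ) : (corridor g).Finite := by
  have hsub : corridor g ⊆
      (fun q : ℤ × ℤ => (![q.1, q.2] : Site 2)) ''
        (Set.Icc (-(2 * (g : ℤ))) (2 * (g : ℤ)) ×ˢ ({-1, 1} : Set ℤ)) := by
    rintro p ⟨h1, h2, h3⟩
    refine ⟨(p 0, p 1), ⟨⟨h1, h2⟩, by simpa using h3⟩, ?_⟩
    funext j
    rcases fin_two j with rfl | rfl <;> simp
  exact Set.Finite.subset
    (Set.Finite.image _ ((Set.finite_Icc _ _).prod ((Set.finite_singleton _).insert _)))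
    hsub

/-- The ℤ² 4-checkerboard does not satisfy TSSM for any gap `g`; specifically, with
`U = {(-2g, 0)}`, `V = {(2g, 0)}`, `u = 3`, `v = 4` (here `2`, `3`) and `s` the alternating
configuration on the corridor, `us` and `sv` are globally admissible but `usv` is not. -/
theorem c24_not_tssm :
    ∀ g : ℕ,
      (∃ x ∈ C24, x ![-(2 * (g : ℤ)), 0] = 2 ∧ ∀ p ∈ corridor g, x p = corridorConf p) ∧
      (∃ x ∈ C24, (∀ p ∈ corridor g, x p = corridorConf p) ∧ x ![2 * (g : ℤ), 0] = 3) ∧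
      (¬ ∃ x ∈ C24, x ![-(2 * (g : ℤ)), 0] = 2 ∧ (∀ p ∈ corridor g, x p = corridorConf p) ∧
        x ![2 * (g : ℤ), 0] = 3) ∧
      ¬ TSSM C24 g := by
  intro g
  have hus : ∀ G : ℕ, ∃ x ∈ C24,
      x ![-(2 * (G : ℤ)), 0] = 2 ∧ ∀ p ∈ corridor G, x p = corridorConf p := by
    intro G
    exact ⟨col 2 3, col_mem_aux 2 3 (by decide) (by decide) (by decide) (by decide) (by decide),
      col_at 2 3 _ (by omega), col_corridor 2 3 G⟩
  have hsv : ∀ G : ℕ, ∃ x ∈ C24,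
      (∀ p ∈ corridor G, x p = corridorConf p) ∧ x ![2 * (G : ℤ), 0] = 3 := by
    intro G
    exact ⟨col 3 2, col_mem_aux 3 2 (by decide) (by decide) (by decide) (by decide) (by decide),
      col_corridor 3 2 G, col_at 3 2 _ (by omega)⟩
  refine ⟨hus g, hsv g, not_usv g, ?_⟩
  intro hT
  set G := g + 1 with hG
  have hne : (![-(2 * (G : ℤ)), 0] : Site 2) ≠ ![2 * (G : ℤ), 0] := by
    intro h
    have := congrFun h 0
    simp at this
    omega
  obtain ⟨x, hx, hU, hS, hV⟩ :=
    hT {![-(2 * (G : ℤ)), 0]} (corridor G) {![2 * (G : ℤ), 0]}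
      (Set.finite_singleton _) (corridor_finite G) (Set.finite_singleton _)
      (by
        rw [Set.disjoint_left]
        rintro p rfl ⟨-, -, h | h⟩ <;> simp at h)
      (by
        rw [Set.disjoint_right]
        rintro p rfl ⟨-, -, h | h⟩ <;> simp at h)
      (by rwa [Set.disjoint_singleton])
      (by
        rintro p rfl q rfl
        simp only [dist1, Fin.sum_univ_two, Matrix.cons_val_zero, Matrix.cons_val_one,
          Matrix.head_cons]
        omega)
      (fun _ => 2) corridorConf (fun _ => 3)
      (by
        obtain ⟨x, hx, ha, hb⟩ := hus G
        exact ⟨x, hx, fun p hp => by rw [Set.mem_singleton_iff] at hp; rw [hp, ha], hb⟩)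
      (by
        obtain ⟨x, hx, ha, hb⟩ := hsv G
        exact ⟨x, hx, ha, fun p hp => by rw [Set.mem_singleton_iff] at hp; rw [hp, hb]⟩)
  exact not_usv G ⟨x, hx, hU _ rfl, hS, hV _ rfl⟩
end
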